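/- Let A be a finite alphabet with commutative bracket [,]. There is a unique algebra morphism ψ from the Butcher–Connes–Kreimer Hopf algebra H(A) (with forest product) to the quasi-shuffle algebra (T(A), ⊛) satisfying ψ(1) = 1, ψ(B_a^+(f)) = ψ(f)a for every letter a and forest f, and ψ(στ) = ψ(σ) ⊛ ψ(τ); moreover ψ is a morphism of coalgebras: ∇ψ(h) = (ψ ⊗ ψ)Δh for all h ∈ H(A), where Δ is the BCK coproduct and ∇ is deconcatenation. -/

import Mathlib

open Finsupp
open scoped Classical TensorProduct

noncomputable section

abbrev TA (A : Type) := List A →₀ ℝ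

def wordE {A : Type} (w : List A) : TA A := Finsupp.single w 1

def appLetter {A : Type} (a : A) : TA A →ₗ[ℝ] TA A :=
  Finsupp.lmapDomain ℝ ℝ (fun u => u ++ [a])

def appGen {A : Type} (c : A →₀ ℝ) (y : TA A) : TA A :=
  c.sum fun x r => r • appLetter x y

def IsQuasiShuffle {A : Type} (br : A → A → (A →₀ ℝ))
    (M : TA A →ₗ[ℝ] TA A →ₗ[ℝ] TA A) : Prop :=
  (∀ x : TA A, M (wordE []) x = x) ∧ (∀ x : TA A, M x (wordE []) = x) ∧
  ∀ (v w : List A) (a b : A),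
    M (wordE (v ++ [a])) (wordE (w ++ [b])) =
      appLetter a (M (wordE v) (wordE (w ++ [b]))) +
      appLetter b (M (wordE (v ++ [a])) (wordE w)) +
      appGen (br a b) (M (wordE v) (wordE w))

def brExt {A : Type} (br : A → A → (A →₀ ℝ)) (f g : A →₀ ℝ) : A →₀ ℝ :=
  f.sum fun a ra => g.sum fun b rb => (ra * rb) • br a b

/-- `A`-decorated rooted trees. -/
inductive RT (A : Type) : Type
  | node : A → List (RT A) → RT A

/-- The Butcher–Connes–Kreimer algebra: the free vector space on (planar) forests,
with the forest product. -/
abbrev HBCK (A : Type) := MonoidAlgebra ℝ (FreeMonoid (RT A))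

/-- The grafting operator `B⁺_a`. -/
def Bplus {A : Type} (a : A) : HBCK A →ₗ[ℝ] HBCK A :=
  MonoidAlgebra.mapDomainLinearMap ℝ ℝ
    (fun f : FreeMonoid (RT A) => FreeMonoid.of (RT.node a (FreeMonoid.toList f)))

/-- The basis forest `f` as an element of the BCK algebra. -/
def fE {A : Type} (f : FreeMonoid (RT A)) : HBCK A := MonoidAlgebra.single f 1

mutual
/-- The BCK coproduct on a tree. -/
def deltaT {A : Type} : RT A → HBCK A ⊗[ℝ] HBCK A
  | RT.node a f =>
      fE (FreeMonoid.ofList [RT.node a f]) ⊗ₜ[ℝ] (1 : HBCK A) +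
      LinearMap.lTensor (HBCK A) (Bplus a) (deltaF f)
/-- The BCK coproduct on a forest (multiplicative extension). -/
def deltaF {A : Type} : List (RT A) → HBCK A ⊗[ℝ] HBCK A
  | [] => 1
  | t :: f => deltaT t * deltaF f
end

/-- The BCK coproduct, extended linearly. -/
def deltaBCK (A : Type) : HBCK A →ₗ[ℝ] HBCK A ⊗[ℝ] HBCK A :=
  (Finsupp.lsum ℝ fun f => LinearMap.toSpanSingleton ℝ (HBCK A ⊗[ℝ] HBCK A)
    (deltaF (FreeMonoid.toList f))) ∘ₗ (MonoidAlgebra.coeffLinearEquiv ℝ).toLinearMap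

/-- The deconcatenation coproduct on `T(A)`. -/
def deconc (A : Type) : TA A →ₗ[ℝ] TA A ⊗[ℝ] TA A :=
  Finsupp.lsum ℝ fun u => LinearMap.toSpanSingleton ℝ (TA A ⊗[ℝ] TA A)
    (∑ k ∈ Finset.range (u.length + 1), wordE (u.take k) ⊗ₜ[ℝ] wordE (u.drop k))

/-!
Since forests are words in trees, `ψ` is forced by its defining properties: on a forest it is
the `⊛`-product of its values on the trees, and `ψ(B⁺_a f) = ψ(f)a`. Taking this recursion as
the definition, multiplicativity on the free monoid of forests reduces to associativity of `⊛`,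
which follows from associativity of the bracket by induction on the total length of three words.
Deconcatenation satisfies `∇(wa) = (id ⊗ ·a)(∇w) + wa ⊗ 1`, which has the same shape as the
recursion `Δ(B⁺_a f) = B⁺_a f ⊗ 1 + (id ⊗ B⁺_a)(Δf)`; together with the fact that `∇` is
multiplicative for `⊛` (again by induction on length), this gives `∇ψ = (ψ ⊗ ψ)Δ` by induction
on forests.
-/

section

variable {A : Type}

lemma single_eq_smul_wordE (w : List A) (r : ℝ) : (single w r : TA A) = r • wordE w := by
  rw [wordE, smul_single_one]

lemma appLetter_wordE (a : A) (u : List A) : appLetter a (wordE u) = wordE (u ++ [a]) := by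
  simp [appLetter, wordE]

def appGenₗ : (A →₀ ℝ) →ₗ[ℝ] TA A →ₗ[ℝ] TA A :=
  linearCombination ℝ appLetter

lemma appGenₗ_apply (c : A →₀ ℝ) (y : TA A) : appGenₗ c y = appGen c y := by
  simp [appGenₗ, appGen, linearCombination_apply, Finsupp.sum, LinearMap.sum_apply]

lemma appGenₗ_single_one (a : A) : appGenₗ (single a 1) = appLetter a := by
  simp [appGenₗ]

lemma wordE_concat (u : List A) (a : A) :
    wordE (u ++ [a]) = appGenₗ (single a 1) (wordE u) := by
  rw [appGenₗ_single_one, appLetter_wordE]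

def brExtₗ (br : A → A → (A →₀ ℝ)) : (A →₀ ℝ) →ₗ[ℝ] (A →₀ ℝ) →ₗ[ℝ] (A →₀ ℝ) :=
  linearCombination ℝ fun a => linearCombination ℝ (br a)

lemma brExtₗ_apply (br : A → A → (A →₀ ℝ)) (e f : A →₀ ℝ) :
    brExtₗ br e f = brExt br e f := by
  simp [brExtₗ, brExt, linearCombination_apply, Finsupp.sum, LinearMap.sum_apply,
    Finset.smul_sum, mul_smul]

lemma brExtₗ_single_one (br : A → A → (A →₀ ℝ)) (a b : A) :
    brExtₗ br (single a 1) (single b 1) = br a b := by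
  simp [brExtₗ]

lemma deconc_wordE (u : List A) :
    deconc A (wordE u) =
      ∑ k ∈ Finset.range (u.length + 1), wordE (u.take k) ⊗ₜ[ℝ] wordE (u.drop k) := by
  simp [deconc, wordE]

lemma deconc_wordE_nil : deconc A (wordE []) = wordE [] ⊗ₜ[ℝ] wordE [] := by
  simp [deconc_wordE]

lemma deconc_wordE_concat (u : List A) (a : A) :
    deconc A (wordE (u ++ [a])) =
      (appLetter a).lTensor (TA A) (deconc A (wordE u)) + wordE (u ++ [a]) ⊗ₜ[ℝ] wordE [] := by
  rw [deconc_wordE, deconc_wordE, map_sum, List.length_append, List.length_singleton,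
    Finset.sum_range_succ]
  congr 1
  · refine Finset.sum_congr rfl fun k hk => ?_
    have hk : k ≤ u.length := Nat.lt_succ_iff.mp (Finset.mem_range.mp hk)
    rw [LinearMap.lTensor_tmul, appLetter_wordE, List.take_append_of_le_length hk,
      List.drop_append_of_le_length hk]
  · simp [List.take_of_length_le]

lemma deconc_appLetter (a : A) (x : TA A) :
    deconc A (appLetter a x) =
      (appLetter a).lTensor (TA A) (deconc A x) + appLetter a x ⊗ₜ[ℝ] wordE [] := by
  induction x using Finsupp.induction_linear with
  | zero => simp
  | add x x' hx hx' => simp only [map_add, hx, hx', TensorProduct.add_tmul]; abel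
  | single u r =>
    simp only [single_eq_smul_wordE, map_smul, appLetter_wordE, deconc_wordE_concat,
      TensorProduct.smul_tmul', smul_add]

lemma deconc_appGen (e : A →₀ ℝ) (x : TA A) :
    deconc A (appGenₗ e x) =
      (appGenₗ e).lTensor (TA A) (deconc A x) + appGenₗ e x ⊗ₜ[ℝ] wordE [] := by
  induction e using Finsupp.induction_linear with
  | zero => simp
  | add e e' he he' =>
    simp only [map_add, LinearMap.add_apply, LinearMap.lTensor_add, he, he',
      TensorProduct.add_tmul]
    abel
  | single a r =>
    simp only [← smul_single_one a r, map_smul, LinearMap.smul_apply, appGenₗ_single_one,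
      LinearMap.lTensor_smul, deconc_appLetter, TensorProduct.smul_tmul', smul_add]

namespace IsQuasiShuffle

variable {br : A → A → (A →₀ ℝ)} {M : TA A →ₗ[ℝ] TA A →ₗ[ℝ] TA A}

local notation "M₂" => TensorProduct.map₂ M M

lemma one_left (hM : IsQuasiShuffle br M) (x : TA A) : M (wordE []) x = x := hM.1 x

lemma one_right (hM : IsQuasiShuffle br M) (x : TA A) : M x (wordE []) = x := hM.2.1 x

lemma appLetter_appLetter (hM : IsQuasiShuffle br M) (a b : A) (x y : TA A) :
    M (appLetter a x) (appLetter b y) =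
      appLetter a (M x (appLetter b y)) + appLetter b (M (appLetter a x) y) +
        appGenₗ (br a b) (M x y) := by
  induction x using Finsupp.induction_linear with
  | zero => simp
  | add x x' hx hx' => simp only [map_add, LinearMap.add_apply, hx, hx']; abel
  | single v r =>
    induction y using Finsupp.induction_linear with
    | zero => simp
    | add y y' hy hy' => simp only [map_add, hy, hy']; abel
    | single w s =>
      simp only [single_eq_smul_wordE, map_smul, LinearMap.smul_apply, appLetter_wordE,
        hM.2.2, appGenₗ_apply, smul_add]

/-- Unlike the recursion on letters, this form is closed under the bracket terms it produces. -/
lemma appGen_appGen (hM : IsQuasiShuffle br M) (e f : A →₀ ℝ) (x y : TA A) :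
    M (appGenₗ e x) (appGenₗ f y) =
      appGenₗ e (M x (appGenₗ f y)) + appGenₗ f (M (appGenₗ e x) y) +
        appGenₗ (brExtₗ br e f) (M x y) := by
  induction e using Finsupp.induction_linear with
  | zero => simp
  | add e e' he he' => simp only [map_add, LinearMap.add_apply, he, he']; abel
  | single a r =>
    induction f using Finsupp.induction_linear with
    | zero => simp
    | add f f' hf hf' => simp only [map_add, LinearMap.add_apply, hf, hf']; abel
    | single b s =>
      rw [← smul_single_one a r, ← smul_single_one b s]
      simp only [map_smul, LinearMap.smul_apply, appGenₗ_single_one, brExtₗ_single_one,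
        hM.appLetter_appLetter, smul_add, smul_comm r s]

section Associativity

variable (hM : IsQuasiShuffle br M)
  (hbr_assoc : ∀ f g h : A →₀ ℝ, brExt br (brExt br f g) h = brExt br f (brExt br g h))
include hM hbr_assoc

theorem assoc_wordE (u v w : List A) :
    M (M (wordE u) (wordE v)) (wordE w) = M (wordE u) (M (wordE v) (wordE w)) := by
  rcases List.eq_nil_or_concat' u with rfl | ⟨u, a, rfl⟩
  · rw [hM.one_left, hM.one_left]
  rcases List.eq_nil_or_concat' v with rfl | ⟨v, b, rfl⟩
  · rw [hM.one_right, hM.one_left]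
  rcases List.eq_nil_or_concat' w with rfl | ⟨w, c, rfl⟩
  · rw [hM.one_right, hM.one_right]
  have ih₁ := assoc_wordE u (v ++ [b]) (w ++ [c])
  have ih₂ := assoc_wordE (u ++ [a]) v (w ++ [c])
  have ih₃ := assoc_wordE u v (w ++ [c])
  have ih₄ := assoc_wordE u (v ++ [b]) w
  have ih₅ := assoc_wordE (u ++ [a]) v w
  have ih₆ := assoc_wordE u v w
  have ih₇ := assoc_wordE (u ++ [a]) (v ++ [b]) w
  simp only [wordE_concat] at ih₁ ih₂ ih₃ ih₄ ih₅ ih₇ ⊢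
  -- Expand both sides and rebracket the six shorter triple products on the left; on the right,
  -- the term ending in `c` is rebracketed by `ih₇` before being expanded in turn.
  simp only [hM.appGen_appGen, map_add, LinearMap.add_apply]
  rw [ih₁, ih₂, ih₃, ih₄, ih₅, ih₆]
  simp only [hM.appGen_appGen, map_add]
  rw [← ih₇]
  simp only [hM.appGen_appGen, map_add, LinearMap.add_apply]
  have hbr : brExtₗ br (brExtₗ br (single a 1) (single b 1)) (single c 1) =
      brExtₗ br (single a 1) (brExtₗ br (single b 1) (single c 1)) := by
    simp only [brExtₗ_apply, hbr_assoc]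
  rw [hbr]
  abel
termination_by u.length + v.length + w.length

theorem assoc (x y z : TA A) : M (M x y) z = M x (M y z) := by
  have h : M.compr₂ M = ((LinearMap.llcomp ℝ _ _ _).comp M).compl₂ M := by
    ext u v w : 6
    exact hM.assoc_wordE hbr_assoc u v w
  exact LinearMap.congr_fun (LinearMap.congr_fun₂ h x y) z

end Associativity

lemma map₂_wordE_nil_left (hM : IsQuasiShuffle br M) (P : TA A ⊗[ℝ] TA A) :
    M₂ (wordE [] ⊗ₜ wordE []) P = P := by
  induction P with
  | zero => simp
  | add P Q hP hQ => simp only [map_add, hP, hQ]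
  | tmul x y => simp only [TensorProduct.map₂_apply_tmul, TensorProduct.map_tmul, hM.one_left]

lemma map₂_wordE_nil_right (hM : IsQuasiShuffle br M) (P : TA A ⊗[ℝ] TA A) :
    M₂ P (wordE [] ⊗ₜ wordE []) = P := by
  induction P with
  | zero => simp
  | add P Q hP hQ => simp only [map_add, LinearMap.add_apply, hP, hQ]
  | tmul x y => simp only [TensorProduct.map₂_apply_tmul, TensorProduct.map_tmul, hM.one_right]

lemma map₂_lTensor_tmul_wordE_nil (hM : IsQuasiShuffle br M) (e : A →₀ ℝ)
    (P : TA A ⊗[ℝ] TA A) (y : TA A) :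
    M₂ ((appGenₗ e).lTensor (TA A) P) (y ⊗ₜ wordE []) =
      (appGenₗ e).lTensor (TA A) (M₂ P (y ⊗ₜ wordE [])) := by
  induction P with
  | zero => simp
  | add P Q hP hQ => simp only [map_add, LinearMap.add_apply, hP, hQ]
  | tmul p q =>
    simp only [LinearMap.lTensor_tmul, TensorProduct.map₂_apply_tmul, TensorProduct.map_tmul,
      hM.one_right]

lemma map₂_tmul_wordE_nil_lTensor (hM : IsQuasiShuffle br M) (f : A →₀ ℝ) (x : TA A)
    (Q : TA A ⊗[ℝ] TA A) :
    M₂ (x ⊗ₜ wordE []) ((appGenₗ f).lTensor (TA A) Q) =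
      (appGenₗ f).lTensor (TA A) (M₂ (x ⊗ₜ wordE []) Q) := by
  induction Q with
  | zero => simp
  | add P Q hP hQ => simp only [map_add, hP, hQ]
  | tmul p q =>
    simp only [LinearMap.lTensor_tmul, TensorProduct.map₂_apply_tmul, TensorProduct.map_tmul,
      hM.one_left]

lemma map₂_lTensor_lTensor (hM : IsQuasiShuffle br M) (e f : A →₀ ℝ)
    (P Q : TA A ⊗[ℝ] TA A) :
    M₂ ((appGenₗ e).lTensor (TA A) P) ((appGenₗ f).lTensor (TA A) Q) =
      (appGenₗ e).lTensor (TA A) (M₂ P ((appGenₗ f).lTensor (TA A) Q)) +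
        (appGenₗ f).lTensor (TA A) (M₂ ((appGenₗ e).lTensor (TA A) P) Q) +
        (appGenₗ (brExtₗ br e f)).lTensor (TA A) (M₂ P Q) := by
  induction P with
  | zero => simp
  | add P P' hP hP' => simp only [map_add, LinearMap.add_apply, hP, hP']; abel
  | tmul p₁ p₂ =>
    induction Q with
    | zero => simp
    | add Q Q' hQ hQ' => simp only [map_add, hQ, hQ']; abel
    | tmul q₁ q₂ =>
      simp only [LinearMap.lTensor_tmul, TensorProduct.map₂_apply_tmul, TensorProduct.map_tmul,
        hM.appGen_appGen, TensorProduct.tmul_add]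

theorem deconc_map_wordE (hM : IsQuasiShuffle br M) (u v : List A) :
    deconc A (M (wordE u) (wordE v)) = M₂ (deconc A (wordE u)) (deconc A (wordE v)) := by
  rcases List.eq_nil_or_concat' u with rfl | ⟨u, a, rfl⟩
  · rw [hM.one_left, deconc_wordE_nil, hM.map₂_wordE_nil_left]
  rcases List.eq_nil_or_concat' v with rfl | ⟨v, b, rfl⟩
  · rw [hM.one_right, deconc_wordE_nil, hM.map₂_wordE_nil_right]
  have ih₁ := hM.deconc_map_wordE u (v ++ [b])
  have ih₂ := hM.deconc_map_wordE (u ++ [a]) v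
  have ih₃ := hM.deconc_map_wordE u v
  simp only [wordE_concat] at ih₁ ih₂ ⊢
  rw [hM.appGen_appGen]
  simp only [map_add, deconc_appGen, ih₁, ih₂, ih₃, LinearMap.add_apply,
    hM.map₂_lTensor_lTensor, hM.map₂_lTensor_tmul_wordE_nil, hM.map₂_tmul_wordE_nil_lTensor]
  simp only [TensorProduct.map₂_apply_tmul, TensorProduct.map_tmul, hM.one_left,
    hM.appGen_appGen, TensorProduct.add_tmul]
  abel
termination_by u.length + v.length

theorem deconc_map (hM : IsQuasiShuffle br M) (x y : TA A) :
    deconc A (M x y) = M₂ (deconc A x) (deconc A y) := by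
  have h : M.compr₂ (deconc A) = (M₂).compl₁₂ (deconc A) (deconc A) := by
    ext u v
    exact hM.deconc_map_wordE u v
  exact LinearMap.congr_fun₂ h x y

end IsQuasiShuffle

lemma HBCK.lhom_ext {N : Type*} [AddCommMonoid N] [Module ℝ N] {φ φ' : HBCK A →ₗ[ℝ] N}
    (h : ∀ f, φ (fE f) = φ' (fE f)) : φ = φ' :=
  MonoidAlgebra.lhom_ext' fun f => LinearMap.ext_ring (h f)

lemma fE_one : fE (1 : FreeMonoid (RT A)) = 1 := MonoidAlgebra.one_def.symm

lemma fE_mul (f g : FreeMonoid (RT A)) : fE (f * g) = fE f * fE g := by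
  simp [fE, MonoidAlgebra.single_mul_single]

lemma deltaBCK_fE (f : FreeMonoid (RT A)) : deltaBCK A (fE f) = deltaF (FreeMonoid.toList f) := by
  simp [deltaBCK, fE]

section Arborification

variable (M : TA A →ₗ[ℝ] TA A →ₗ[ℝ] TA A)

mutual
def arborifyTree : RT A → TA A
  | RT.node a f => appLetter a (arborifyForest f)
def arborifyForest : List (RT A) → TA A
  | [] => wordE []
  | t :: f => M (arborifyTree t) (arborifyForest f)
end

def arborification : HBCK A →ₗ[ℝ] TA A :=
  linearCombination ℝ (fun f => arborifyForest M (FreeMonoid.toList f)) ∘ₗ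
    (MonoidAlgebra.coeffLinearEquiv ℝ).toLinearMap

lemma arborification_fE (f : FreeMonoid (RT A)) :
    arborification M (fE f) = arborifyForest M (FreeMonoid.toList f) := by
  simp [arborification, fE]

lemma arborification_one : arborification M 1 = wordE [] := by
  rw [← fE_one, arborification_fE]
  rfl

variable {M} {br : A → A → (A →₀ ℝ)} (hM : IsQuasiShuffle br M)
include hM

lemma arborifyForest_singleton (t : RT A) : arborifyForest M [t] = arborifyTree M t := by
  rw [arborifyForest, arborifyForest, hM.one_right]

lemma arborification_fE_node (a : A) (f : List (RT A)) :
    arborification M (fE (FreeMonoid.ofList [RT.node a f])) =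
      appLetter a (arborification M (fE (FreeMonoid.ofList f))) := by
  rw [arborification_fE, arborification_fE, FreeMonoid.toList_ofList, FreeMonoid.toList_ofList,
    arborifyForest_singleton hM, arborifyTree]

lemma arborification_comp_Bplus (a : A) :
    arborification M ∘ₗ Bplus a = appLetter a ∘ₗ arborification M := by
  refine HBCK.lhom_ext fun f => ?_
  rw [LinearMap.comp_apply, LinearMap.comp_apply, Bplus, fE,
    MonoidAlgebra.mapDomainLinearMap_single, ← fE, ← fE, arborification_fE, arborification_fE,
    FreeMonoid.toList_of, arborifyForest_singleton hM, arborifyTree]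

lemma deconc_arborifyTree_node (a : A) (f : List (RT A))
    (ih : deconc A (arborifyForest M f) =
      TensorProduct.map (arborification M) (arborification M) (deltaF f)) :
    deconc A (arborifyTree M (RT.node a f)) =
      TensorProduct.map (arborification M) (arborification M) (deltaT (RT.node a f)) := by
  rw [arborifyTree, deconc_appLetter, ih, deltaT, map_add, TensorProduct.map_tmul,
    LinearMap.map_lTensor, arborification_comp_Bplus hM, ← LinearMap.lTensor_map,
    arborification_one, arborification_fE_node hM, arborification_fE, FreeMonoid.toList_ofList,
    add_comm]

section

variable (hbr_assoc : ∀ f g h : A →₀ ℝ, brExt br (brExt br f g) h = brExt br f (brExt br g h))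
include hbr_assoc

lemma arborifyForest_append (f g : List (RT A)) :
    arborifyForest M (f ++ g) = M (arborifyForest M f) (arborifyForest M g) := by
  induction f with
  | nil => rw [List.nil_append, arborifyForest, hM.one_left]
  | cons t f ih => rw [List.cons_append, arborifyForest, arborifyForest, ih, hM.assoc hbr_assoc]

lemma arborification_mul (x y : HBCK A) :
    arborification M (x * y) = M (arborification M x) (arborification M y) := by
  have h : (LinearMap.mul ℝ (HBCK A)).compr₂ (arborification M) =
      M.compl₁₂ (arborification M) (arborification M) := by
    refine HBCK.lhom_ext fun f => HBCK.lhom_ext fun g => ?_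
    simp only [LinearMap.compr₂_apply, LinearMap.compl₁₂_apply, LinearMap.mul_apply', ← fE_mul,
      arborification_fE, FreeMonoid.toList_mul, arborifyForest_append hM hbr_assoc]
  exact LinearMap.congr_fun₂ h x y

lemma map_arborification_mul (X Y : HBCK A ⊗[ℝ] HBCK A) :
    TensorProduct.map (arborification M) (arborification M) (X * Y) =
      TensorProduct.map₂ M M (TensorProduct.map (arborification M) (arborification M) X)
        (TensorProduct.map (arborification M) (arborification M) Y) := by
  induction X with
  | zero => simp
  | add X X' hX hX' => simp only [add_mul, map_add, LinearMap.add_apply, hX, hX']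
  | tmul x₁ x₂ =>
    induction Y with
    | zero => simp
    | add Y Y' hY hY' => simp only [mul_add, map_add, hY, hY']
    | tmul y₁ y₂ =>
      simp only [Algebra.TensorProduct.tmul_mul_tmul, TensorProduct.map_tmul,
        TensorProduct.map₂_apply_tmul, arborification_mul hM hbr_assoc]

theorem deconc_arborifyForest : ∀ f : List (RT A),
    deconc A (arborifyForest M f) =
      TensorProduct.map (arborification M) (arborification M) (deltaF f)
  | [] => by
    rw [arborifyForest, deconc_wordE_nil, deltaF, Algebra.TensorProduct.one_def,
      TensorProduct.map_tmul, arborification_one]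
  | RT.node a g :: f => by
    rw [arborifyForest, hM.deconc_map,
      deconc_arborifyTree_node hM a g (deconc_arborifyForest g), deconc_arborifyForest f, deltaF,
      map_arborification_mul hM hbr_assoc]

theorem deconc_comp_arborification :
    deconc A ∘ₗ arborification M =
      TensorProduct.map (arborification M) (arborification M) ∘ₗ deltaBCK A := by
  refine HBCK.lhom_ext fun f => ?_
  rw [LinearMap.comp_apply, LinearMap.comp_apply, arborification_fE, deltaBCK_fE,
    deconc_arborifyForest hM hbr_assoc]

end

end Arborification

section Uniqueness

variable {M : TA A →ₗ[ℝ] TA A →ₗ[ℝ] TA A} (ψ : HBCK A →ₗ[ℝ] TA A)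
  (h_one : ψ 1 = wordE [])
  (h_node : ∀ (a : A) (f : List (RT A)),
    ψ (fE (FreeMonoid.ofList [RT.node a f])) = appLetter a (ψ (fE (FreeMonoid.ofList f))))
  (h_mul : ∀ f g : FreeMonoid (RT A), ψ (fE (f * g)) = M (ψ (fE f)) (ψ (fE g)))
include h_one h_node h_mul

theorem eq_arborifyForest : ∀ f : List (RT A), ψ (fE (FreeMonoid.ofList f)) = arborifyForest M f
  | [] => by rw [FreeMonoid.ofList_nil, fE_one, h_one, arborifyForest]
  | RT.node a g :: f => by
    rw [FreeMonoid.ofList_cons, ← FreeMonoid.ofList_singleton, h_mul, h_node,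
      eq_arborifyForest g, eq_arborifyForest f, arborifyForest, arborifyTree]

theorem eq_arborification : ψ = arborification M :=
  HBCK.lhom_ext fun f => by
    rw [arborification_fE, ← eq_arborifyForest ψ h_one h_node h_mul, FreeMonoid.ofList_toList]

end Uniqueness

end

/-- contracting arborification: there is a unique linear map
`ψ : H(A) → T(A)` with `ψ(1) = 1`, `ψ(B⁺_a(f)) = ψ(f)a` and
`ψ(στ) = ψ(σ) ⊛ ψ(τ)`; moreover it intertwines the BCK coproduct with
deconcatenation: `∇ψ = (ψ ⊗ ψ)Δ`. -/
theorem contracting_arborification {A : Type}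
    (br : A → A → (A →₀ ℝ))
    (hbr_comm : ∀ a b : A, br a b = br b a)
    (hbr_assoc : ∀ f g h : A →₀ ℝ, brExt br (brExt br f g) h = brExt br f (brExt br g h))
    (M : TA A →ₗ[ℝ] TA A →ₗ[ℝ] TA A)
    (hM : IsQuasiShuffle br M) :
    ∃! ψ : HBCK A →ₗ[ℝ] TA A,
      ψ (1 : HBCK A) = wordE [] ∧
      (∀ (a : A) (f : List (RT A)),
        ψ (fE (FreeMonoid.ofList [RT.node a f])) =
          appLetter a (ψ (fE (FreeMonoid.ofList f)))) ∧
      (∀ f g : FreeMonoid (RT A),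
        ψ (fE (f * g)) = M (ψ (fE f)) (ψ (fE g))) ∧
      (∀ h : HBCK A,
        deconc A (ψ h) = TensorProduct.map ψ ψ (deltaBCK A h)) := by
  refine ⟨arborification M, ⟨arborification_one M, arborification_fE_node hM,
    fun f g => ?_, fun h => ?_⟩, fun ψ ⟨h_one, h_node, h_mul, _⟩ => ?_⟩
  · rw [fE_mul, arborification_mul hM hbr_assoc]
  · exact LinearMap.congr_fun (deconc_comp_arborification hM hbr_assoc) h
  · exact eq_arborification ψ h_one h_node h_mul

end
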